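/- Let Ã, B̃ ∈ ℝ^{m×n} and suppose there exists γ > 0 such that C̃ := Ã + γB̃ = D + r̂ĉᵀ, where D = 𝟙ₘuᵀ + v𝟙ₙᵀ has rank 2, rank(C̃) = 3, r̂ ∈ ℝᵐ, ĉ ∈ ℝⁿ. Then there exist x₁ ∈ ℝⁿ with C̃x₁ = 𝟙ₘ and y₁ ∈ ℝᵐ with w₁ = y₁ᵀC̃x₁ ≠ 0, and setting ûᵀ = w₁⁻¹y₁ᵀC̃ and C̃₂ = C̃ − 𝟙ₘûᵀ, there exist y₂ with y₂ᵀC̃₂ = 𝟙ₙᵀ and x₂ with w₂ = y₂ᵀC̃₂x₂ ≠ 0, such that, setting v̂ = w₂⁻¹C̃₂x₂, the matrix C̃₃ = C̃ − 𝟙ₘûᵀ − v̂𝟙ₙᵀ equals r̂ĉᵀ. Consequently, defining Â = Ã − 𝟙ₘûᵀ and B̂ = γB̃ − v̂𝟙ₙᵀ, one has Â + B̂ = r̂ĉᵀ, a rank-one matrix, and the game (Ã, B̃) is strategically equivalent to the rank-1 game (Â, B̂). -/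

import Mathlib

open Matrix

/-- `(p, q)` is a Nash equilibrium of the bimatrix game `(A, B)`. -/
def IsNashEq {m n : ℕ} (A B : Matrix (Fin m) (Fin n) ℝ)
    (p : Fin m → ℝ) (q : Fin n → ℝ) : Prop :=
  p ∈ stdSimplex ℝ (Fin m) ∧ q ∈ stdSimplex ℝ (Fin n) ∧
  (∀ p' ∈ stdSimplex ℝ (Fin m), p' ⬝ᵥ A.mulVec q ≤ p ⬝ᵥ A.mulVec q) ∧
  (∀ q' ∈ stdSimplex ℝ (Fin n), p ⬝ᵥ B.mulVec q' ≤ p ⬝ᵥ B.mulVec q)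

/-!
Since rank C̃ = 3, the three outer products in C̃ = 𝟙uᵀ + v𝟙ᵀ + r̂ĉᵀ have linearly independent
left factors 𝟙, v, r̂ and linearly independent right factors u, 𝟙, ĉ. Choosing x₁, x₂, y₁, y₂
biorthogonal to these families, the two peeling steps recover exactly û = u and v̂ = v, so
C̃₃ = r̂ĉᵀ. Subtracting 𝟙ûᵀ from Ã and v̂𝟙ᵀ from γB̃ shifts every payoff of a player by an amount
that does not depend on that player's own strategy, and scaling B̃ by γ > 0 is monotone, so the
Nash equilibria are unchanged.
-/

section OuterProducts

variable {K ι m n : Type*} [Field K] [Fintype ι]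

theorem sum_vecMulVec_mulVec [Fintype n] (a : ι → m → K) (b : ι → n → K) (x : n → K) :
    (∑ i, vecMulVec (a i) (b i)) *ᵥ x = ∑ i, (b i ⬝ᵥ x) • a i := by
  simp [sum_mulVec, vecMulVec_mulVec]

theorem vecMul_sum_vecMulVec [Fintype m] (a : ι → m → K) (b : ι → n → K) (y : m → K) :
    y ᵥ* (∑ i, vecMulVec (a i) (b i)) = ∑ i, (y ⬝ᵥ a i) • b i := by
  simp [vecMul_sum, vecMul_vecMulVec]

theorem sum_vecMulVec_mulVec_of_dotProduct_eq_single [Fintype n] [DecidableEq ι]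
    {a : ι → m → K} {b : ι → n → K} {x : n → K} {j : ι}
    (hx : ∀ i, b i ⬝ᵥ x = (Pi.single j 1 : ι → K) i) :
    (∑ i, vecMulVec (a i) (b i)) *ᵥ x = a j := by
  simp [sum_vecMulVec_mulVec, hx, Pi.single_apply]

theorem vecMul_sum_vecMulVec_of_dotProduct_eq_single [Fintype m] [DecidableEq ι]
    {a : ι → m → K} {b : ι → n → K} {y : m → K} {j : ι}
    (hy : ∀ i, y ⬝ᵥ a i = (Pi.single j 1 : ι → K) i) :
    y ᵥ* (∑ i, vecMulVec (a i) (b i)) = b j := by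
  simp [vecMul_sum_vecMulVec, hy, Pi.single_apply]

theorem rank_vecMulVec_eq_one [Fintype n] {a : m → K} {b : n → K} (ha : a ≠ 0) (hb : b ≠ 0) :
    (vecMulVec a b).rank = 1 := by
  classical
  refine le_antisymm (rank_vecMulVec_le a b) (Nat.one_le_iff_ne_zero.mpr fun h0 ↦ ?_)
  obtain ⟨j, hj⟩ := Function.ne_iff.mp hb
  have hrange : LinearMap.range (vecMulVec a b).mulVecLin = ⊥ := Submodule.finrank_eq_zero.mp h0
  have : vecMulVec a b *ᵥ Pi.single j 1 = 0 :=
    (Submodule.mem_bot K).mp (hrange ▸ LinearMap.mem_range_self _ _)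
  exact hj (by simpa [col_vecMulVec, ha] using this)

variable [Fintype m] [Fintype n]

theorem linearIndependent_of_rank_sum_vecMulVec {a : ι → m → K} {b : ι → n → K}
    (h : (∑ i, vecMulVec (a i) (b i)).rank = Fintype.card ι) : LinearIndependent K a := by
  have hle : LinearMap.range (∑ i, vecMulVec (a i) (b i)).mulVecLin ≤
      Submodule.span K (Set.range a) := by
    rintro _ ⟨x, rfl⟩
    rw [mulVecLin_apply, sum_vecMulVec_mulVec]
    exact Submodule.sum_mem _ fun i _ ↦ Submodule.smul_mem _ _ (Submodule.subset_span ⟨i, rfl⟩)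
  refine linearIndependent_iff_card_eq_finrank_span.mpr (le_antisymm ?_ (finrank_range_le_card a))
  exact h ▸ Submodule.finrank_mono hle

theorem linearIndependent_right_of_rank_sum_vecMulVec {a : ι → m → K} {b : ι → n → K}
    (h : (∑ i, vecMulVec (a i) (b i)).rank = Fintype.card ι) : LinearIndependent K b := by
  refine linearIndependent_of_rank_sum_vecMulVec (b := a) ?_
  rwa [← transpose_transpose (∑ i, vecMulVec (b i) (a i)), rank_transpose, transpose_sum,
    Finset.sum_congr rfl fun i _ ↦ transpose_vecMulVec (b i) (a i)]

theorem exists_dotProduct_eq_of_linearIndependent {w : ι → n → K} (hw : LinearIndependent K w)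
    (t : ι → K) : ∃ y, ∀ i, w i ⬝ᵥ y = t i := by
  have hrange : LinearMap.range (of w).mulVecLin = ⊤ := by
    refine Submodule.eq_top_of_finrank_eq ?_
    rw [Module.finrank_fintype_fun_eq_card]
    exact LinearIndependent.rank_matrix (M := of w) hw
  obtain ⟨y, hy⟩ : t ∈ LinearMap.range (of w).mulVecLin := hrange ▸ Submodule.mem_top
  exact ⟨y, fun i ↦ congrFun hy i⟩

end OuterProducts

section ThreeOuterProducts

variable {K m n : Type*} [Field K] {u c : n → K} {v r : m → K}

theorem add_vecMulVec_eq_sum_fin_three :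
    vecMulVec 1 u + vecMulVec v 1 + vecMulVec r c =
      ∑ i, vecMulVec (![1, v, r] i) (![u, 1, c] i) := by
  rw [Fin.sum_univ_three]; rfl

variable [Fintype m] [Fintype n]

theorem rank_vecMulVec_eq_one_of_rank_add_eq_three
    (h : (vecMulVec 1 u + vecMulVec v 1 + vecMulVec r c).rank = 3) :
    (vecMulVec r c).rank = 1 := by
  rw [add_vecMulVec_eq_sum_fin_three, ← Fintype.card_fin 3] at h
  exact rank_vecMulVec_eq_one ((linearIndependent_of_rank_sum_vecMulVec h).ne_zero 2)
    ((linearIndependent_right_of_rank_sum_vecMulVec h).ne_zero 2)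

theorem exists_peeling_vectors_of_rank_eq_three {C : Matrix m n K}
    (hC : C = vecMulVec 1 u + vecMulVec v 1 + vecMulVec r c) (hrank : C.rank = 3) :
    ∃ x₁ y₁ y₂ x₂, C *ᵥ x₁ = 1 ∧ y₁ ⬝ᵥ 1 = 1 ∧ y₁ ᵥ* C = u ∧
      y₂ ᵥ* (C - vecMulVec 1 u) = 1 ∧ (C - vecMulVec 1 u) *ᵥ x₂ = v ∧ y₂ ⬝ᵥ v = 1 := by
  rw [add_vecMulVec_eq_sum_fin_three] at hC
  rw [hC, ← Fintype.card_fin 3] at hrank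
  have hcols := linearIndependent_of_rank_sum_vecMulVec hrank
  have hrows := linearIndependent_right_of_rank_sum_vecMulVec hrank
  obtain ⟨x₁, hx₁⟩ := exists_dotProduct_eq_of_linearIndependent hrows (Pi.single 0 1)
  obtain ⟨x₂, hx₂⟩ := exists_dotProduct_eq_of_linearIndependent hrows (Pi.single 1 1)
  obtain ⟨y₁, hy₁⟩ := exists_dotProduct_eq_of_linearIndependent hcols (Pi.single 0 1)
  obtain ⟨y₂, hy₂⟩ := exists_dotProduct_eq_of_linearIndependent hcols (Pi.single 1 1)
  simp only [dotProduct_comm _ y₁, dotProduct_comm _ y₂] at hy₁ hy₂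
  have hy₂_one : y₂ ⬝ᵥ 1 = 0 := (hy₂ 0).trans (Pi.single_eq_of_ne (by decide) _)
  have hu_x₂ : u ⬝ᵥ x₂ = 0 := (hx₂ 0).trans (Pi.single_eq_of_ne (by decide) _)
  refine ⟨x₁, y₁, y₂, x₂, hC ▸ sum_vecMulVec_mulVec_of_dotProduct_eq_single hx₁,
    (hy₁ 0).trans (Pi.single_eq_same _ _), hC ▸ vecMul_sum_vecMulVec_of_dotProduct_eq_single hy₁,
    ?_, ?_, (hy₂ 1).trans (Pi.single_eq_same _ _)⟩
  · rw [vecMul_sub, hC, vecMul_sum_vecMulVec_of_dotProduct_eq_single hy₂, vecMul_vecMulVec,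
      hy₂_one, zero_smul, sub_zero]
    rfl
  · rw [sub_mulVec, hC, sum_vecMulVec_mulVec_of_dotProduct_eq_single hx₂, vecMulVec_mulVec,
      hu_x₂, MulOpposite.op_zero, zero_smul, sub_zero]
    rfl

end ThreeOuterProducts

section NashShift

theorem dotProduct_vecMulVec_one_mulVec {K ι κ : Type*} [CommSemiring K] [Fintype ι] [Fintype κ]
    {p : ι → K} (hp : ∑ i, p i = 1) (u x : κ → K) : p ⬝ᵥ (vecMulVec 1 u *ᵥ x) = u ⬝ᵥ x := by
  rw [vecMulVec_mulVec, op_smul_eq_smul, dotProduct_smul, dotProduct_one, hp, smul_eq_mul, mul_one]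

theorem dotProduct_vecMulVec_mulVec_one {K ι κ : Type*} [CommSemiring K] [Fintype ι] [Fintype κ]
    {q : κ → K} (hq : ∑ j, q j = 1) (v y : ι → K) : y ⬝ᵥ (vecMulVec v 1 *ᵥ q) = y ⬝ᵥ v := by
  rw [vecMulVec_mulVec, op_smul_eq_smul, dotProduct_smul, one_dotProduct, hq, one_smul]

variable {m n : ℕ} {A B : Matrix (Fin m) (Fin n) ℝ} {p : Fin m → ℝ} {q : Fin n → ℝ}

theorem isNashEq_sub_vecMulVec_one_left_iff (u : Fin n → ℝ) :
    IsNashEq (A - vecMulVec 1 u) B p q ↔ IsNashEq A B p q := by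
  refine and_congr_right fun hp ↦ and_congr_right fun _ ↦ and_congr_left' <|
    forall₂_congr fun p' hp' ↦ ?_
  simp only [sub_mulVec, dotProduct_sub, dotProduct_vecMulVec_one_mulVec hp.2,
    dotProduct_vecMulVec_one_mulVec hp'.2, sub_le_sub_iff_right]

theorem isNashEq_sub_vecMulVec_one_right_iff (v : Fin m → ℝ) :
    IsNashEq A (B - vecMulVec v 1) p q ↔ IsNashEq A B p q := by
  refine and_congr_right fun _ ↦ and_congr_right fun hq ↦ and_congr_right' <|
    forall₂_congr fun q' hq' ↦ ?_
  simp only [sub_mulVec, dotProduct_sub, dotProduct_vecMulVec_mulVec_one hq.2,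
    dotProduct_vecMulVec_mulVec_one hq'.2, sub_le_sub_iff_right]

theorem isNashEq_smul_right_iff {γ : ℝ} (hγ : 0 < γ) :
    IsNashEq A (γ • B) p q ↔ IsNashEq A B p q := by
  refine and_congr_right fun _ ↦ and_congr_right fun _ ↦ and_congr_right' <|
    forall₂_congr fun q' _ ↦ ?_
  simp only [smul_mulVec, dotProduct_smul, smul_eq_mul, mul_le_mul_iff_right₀ hγ]

end NashShift

theorem stmt12_general {m n : ℕ} (Atil Btil : Matrix (Fin m) (Fin n) ℝ)
    (γ : ℝ) (hγ : 0 < γ)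
    (u : Fin n → ℝ) (v : Fin m → ℝ) (rh : Fin m → ℝ) (ch : Fin n → ℝ)
    (hdecomp : Atil + γ • Btil =
      (Matrix.vecMulVec (1 : Fin m → ℝ) u + Matrix.vecMulVec v (1 : Fin n → ℝ))
        + Matrix.vecMulVec rh ch)
    (hrank : (Atil + γ • Btil).rank = 3) :
    ∃ (x₁ : Fin n → ℝ) (y₁ : Fin m → ℝ) (y₂ : Fin m → ℝ) (x₂ : Fin n → ℝ),
      (Atil + γ • Btil).mulVec x₁ = 1 ∧
      y₁ ⬝ᵥ (Atil + γ • Btil).mulVec x₁ ≠ 0 ∧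
      (let Ct := Atil + γ • Btil
       let uh := (y₁ ⬝ᵥ Ct.mulVec x₁)⁻¹ • Ct.vecMul y₁
       let Ct₂ := Ct - Matrix.vecMulVec (1 : Fin m → ℝ) uh
       Ct₂.vecMul y₂ = 1 ∧
       y₂ ⬝ᵥ Ct₂.mulVec x₂ ≠ 0 ∧
       (let vh := (y₂ ⬝ᵥ Ct₂.mulVec x₂)⁻¹ • Ct₂.mulVec x₂
        Ct - Matrix.vecMulVec (1 : Fin m → ℝ) uh - Matrix.vecMulVec vh (1 : Fin n → ℝ)
            = Matrix.vecMulVec rh ch ∧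
        ((Atil - Matrix.vecMulVec (1 : Fin m → ℝ) uh) +
            (γ • Btil - Matrix.vecMulVec vh (1 : Fin n → ℝ)))
          = Matrix.vecMulVec rh ch ∧
        ((Atil - Matrix.vecMulVec (1 : Fin m → ℝ) uh) +
            (γ • Btil - Matrix.vecMulVec vh (1 : Fin n → ℝ))).rank = 1 ∧
        (∀ (p : Fin m → ℝ) (q : Fin n → ℝ),
          IsNashEq Atil Btil p q ↔
            IsNashEq (Atil - Matrix.vecMulVec (1 : Fin m → ℝ) uh)
              (γ • Btil - Matrix.vecMulVec vh (1 : Fin n → ℝ)) p q))) := by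
  set C := Atil + γ • Btil with hC
  obtain ⟨x₁, y₁, y₂, x₂, hCx₁, hy₁_one, hy₁C, hy₂C₂, hC₂x₂, hy₂_v⟩ :=
    exists_peeling_vectors_of_rank_eq_three hdecomp hrank
  have hrest : C - vecMulVec 1 u - vecMulVec v 1 = vecMulVec rh ch := by rw [hdecomp]; abel
  have hshift : Atil - vecMulVec 1 u + (γ • Btil - vecMulVec v 1) = vecMulVec rh ch := by
    rw [← hrest, hC]; abel
  refine ⟨x₁, y₁, y₂, x₂, hCx₁, by rw [hCx₁, hy₁_one]; exact one_ne_zero, ?_⟩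
  dsimp only
  rw [hCx₁, hy₁_one, hy₁C, inv_one, one_smul, hC₂x₂, hy₂_v, inv_one, one_smul]
  refine ⟨hy₂C₂, one_ne_zero, hrest, hshift, ?_, fun p q ↦ ?_⟩
  · rw [hshift]
    exact rank_vecMulVec_eq_one_of_rank_add_eq_three (hdecomp ▸ hrank)
  · rw [isNashEq_sub_vecMulVec_one_left_iff, isNashEq_sub_vecMulVec_one_right_iff,
      isNashEq_smul_right_iff hγ]

theorem stmt12 {m n : ℕ} (Atil Btil : Matrix (Fin m) (Fin n) ℝ)
    (γ : ℝ) (hγ : 0 < γ)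
    (u : Fin n → ℝ) (v : Fin m → ℝ) (rh : Fin m → ℝ) (ch : Fin n → ℝ)
    (hD : (Matrix.vecMulVec (1 : Fin m → ℝ) u + Matrix.vecMulVec v (1 : Fin n → ℝ)).rank = 2)
    (hdecomp : Atil + γ • Btil =
      (Matrix.vecMulVec (1 : Fin m → ℝ) u + Matrix.vecMulVec v (1 : Fin n → ℝ))
        + Matrix.vecMulVec rh ch)
    (hrank : (Atil + γ • Btil).rank = 3) :
    ∃ (x₁ : Fin n → ℝ) (y₁ : Fin m → ℝ) (y₂ : Fin m → ℝ) (x₂ : Fin n → ℝ),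
      (Atil + γ • Btil).mulVec x₁ = 1 ∧
      y₁ ⬝ᵥ (Atil + γ • Btil).mulVec x₁ ≠ 0 ∧
      (let Ct := Atil + γ • Btil
       let uh := (y₁ ⬝ᵥ Ct.mulVec x₁)⁻¹ • Ct.vecMul y₁
       let Ct₂ := Ct - Matrix.vecMulVec (1 : Fin m → ℝ) uh
       Ct₂.vecMul y₂ = 1 ∧
       y₂ ⬝ᵥ Ct₂.mulVec x₂ ≠ 0 ∧
       (let vh := (y₂ ⬝ᵥ Ct₂.mulVec x₂)⁻¹ • Ct₂.mulVec x₂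
        Ct - Matrix.vecMulVec (1 : Fin m → ℝ) uh - Matrix.vecMulVec vh (1 : Fin n → ℝ)
            = Matrix.vecMulVec rh ch ∧
        ((Atil - Matrix.vecMulVec (1 : Fin m → ℝ) uh) +
            (γ • Btil - Matrix.vecMulVec vh (1 : Fin n → ℝ)))
          = Matrix.vecMulVec rh ch ∧
        ((Atil - Matrix.vecMulVec (1 : Fin m → ℝ) uh) +
            (γ • Btil - Matrix.vecMulVec vh (1 : Fin n → ℝ))).rank = 1 ∧
        (∀ (p : Fin m → ℝ) (q : Fin n → ℝ),
          IsNashEq Atil Btil p q ↔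
            IsNashEq (Atil - Matrix.vecMulVec (1 : Fin m → ℝ) uh)
              (γ • Btil - Matrix.vecMulVec vh (1 : Fin n → ℝ)) p q))) :=
  stmt12_general Atil Btil γ hγ u v rh ch hdecomp hrank
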